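/- arXiv:2410.13740 — 2 statements merged into one kernel-verified Lean document; each statement's English description precedes it below -/
import Mathlib

section
/- Let A be an n×n complex Hermitian positive definite matrix and b ∈ ℂⁿ. Suppose w ∈ ℂⁿ is nonzero, λ is a nonzero scalar, and the generalized eigenvalue equation −b(b†w) = λ A w holds (i.e. −b b† w = λ A w). Then b†w ≠ 0, and the vector φ := −λ w / (b†w) satisfies the linear system A φ = b. -/
open scoped Matrix ComplexOrder

theorem Matrix.PosDef.mulVec_ne_zero {n R : Type*} [Fintype n] [Ring R] [PartialOrder R]
    [StarRing R] {M : Matrix n n R} (hM : M.PosDef) {x : n → R} (hx : x ≠ 0) :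
    M *ᵥ x ≠ 0 := fun h => by
  simpa [h] using hM.dotProduct_mulVec_pos hx

section ScalarRelation

variable {K V : Type*} [Field K] [AddCommGroup V] [Module K V] {c lam : K} {b v : V}

theorem ne_zero_of_neg_smul_eq_smul (hlam : lam ≠ 0) (hv : v ≠ 0)
    (h : (-c) • b = lam • v) : c ≠ 0 := by
  rintro rfl
  rw [neg_zero, zero_smul] at h
  exact smul_ne_zero hlam hv h.symm

theorem div_smul_eq_of_neg_smul_eq_smul (hc : c ≠ 0) (h : (-c) • b = lam • v) :
    (-lam / c) • v = b := by
  rw [neg_div, ← div_neg, div_eq_inv_mul, mul_smul, ← h, inv_smul_smul₀ (neg_ne_zero.mpr hc)]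

end ScalarRelation

theorem gevp_ground_state_solves_linear_system_general {n : ℕ}
    (A : Matrix (Fin n) (Fin n) ℂ) (hApd : A.PosDef)
    (b w : Fin n → ℂ) (hw : w ≠ 0) (lam : ℂ) (hlam : lam ≠ 0)
    (heq : (-(star b ⬝ᵥ w)) • b = lam • A.mulVec w) :
    star b ⬝ᵥ w ≠ 0 ∧ A.mulVec ((-lam / (star b ⬝ᵥ w)) • w) = b := by
  have hc : star b ⬝ᵥ w ≠ 0 :=
    ne_zero_of_neg_smul_eq_smul hlam (hApd.mulVec_ne_zero hw) heq
  refine ⟨hc, ?_⟩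
  rw [Matrix.mulVec_smul]
  exact div_smul_eq_of_neg_smul_eq_smul hc heq

/-- Let `A` be an `n × n` complex Hermitian positive definite matrix
and `b ∈ ℂⁿ`. Suppose `w ∈ ℂⁿ` is nonzero, `lam` is a nonzero scalar, and the
generalized eigenvalue equation `-b (b†w) = lam • A w` holds (i.e. `-b b† w = lam A w`).
Then `b†w ≠ 0`, and the vector `φ := (-lam / (b†w)) • w` satisfies the linear system
`A φ = b`. -/
theorem gevp_ground_state_solves_linear_system {n : ℕ}
    (A : Matrix (Fin n) (Fin n) ℂ) (hA : A.IsHermitian) (hApd : A.PosDef)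
    (b w : Fin n → ℂ) (hw : w ≠ 0) (lam : ℂ) (hlam : lam ≠ 0)
    (heq : (-(star b ⬝ᵥ w)) • b = lam • A.mulVec w) :
    star b ⬝ᵥ w ≠ 0 ∧ A.mulVec ((-lam / (star b ⬝ᵥ w)) • w) = b :=
  gevp_ground_state_solves_linear_system_general A hApd b w hw lam hlam heq
end

section
/- Deflation theorem for generalized eigenvalue problems: Let H be an n×n complex Hermitian matrix and M an n×n complex Hermitian positive definite matrix, and suppose φ₀, …, φ_{n-1} ∈ ℂⁿ satisfy Hφ_i = λ_i Mφ_i with λ₀ ≤ λ₁ ≤ ⋯ ≤ λ_{n-1} real and φ_i† M φ_j = δ_{ij}. Fix 0 ≤ k ≤ n−1 and real numbers β₀, …, β_{k-1} with β_m > λ_k − λ_m for each m < k. Define H' = H + Σ_{m<k} β_m (Mφ_m)(Mφ_m)†. Then the infimum over nonzero φ ∈ ℂⁿ of φ†H'φ / φ†Mφ equals λ_k, and it is attained at φ = φ_k. -/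
open scoped Matrix ComplexOrder
open Matrix Finset

lemma vecMulVec_quad {n : ℕ} (u v a b : Fin n → ℂ) :
    a ⬝ᵥ (Matrix.vecMulVec u v).mulVec b = (a ⬝ᵥ u) * (v ⬝ᵥ b) := by
  simp only [Matrix.mulVec, Matrix.vecMulVec_apply, dotProduct, Finset.mul_sum,
    Finset.sum_mul, Matrix.of_apply, dotProduct]
  rw [Finset.sum_comm]
  apply Finset.sum_congr rfl
  intro j _
  apply Finset.sum_congr rfl
  intro i _
  ring

lemma sum_mulVec' {n : ℕ} {s : Finset (Fin n)} (A : Fin n → Matrix (Fin n) (Fin n) ℂ)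
    (v : Fin n → ℂ) : (∑ m ∈ s, A m) *ᵥ v = ∑ m ∈ s, (A m) *ᵥ v := by
  ext i
  simp only [Matrix.mulVec, dotProduct, Finset.sum_apply, Finset.sum_mul,
    Matrix.sum_apply]
  rw [Finset.sum_comm]

lemma dotProduct_sum' {n : ℕ} {s : Finset (Fin n)} (v : Fin n → ℂ) (f : Fin n → Fin n → ℂ) :
    v ⬝ᵥ (∑ m ∈ s, f m) = ∑ m ∈ s, v ⬝ᵥ f m := by
  simp only [dotProduct, Finset.sum_apply, Finset.mul_sum]
  rw [Finset.sum_comm]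

lemma quad_transfer {n : ℕ} (Φ A : Matrix (Fin n) (Fin n) ℂ) (c : Fin n → ℂ) :
    star (Φ.mulVec c) ⬝ᵥ A.mulVec (Φ.mulVec c) = star c ⬝ᵥ (Φᴴ * A * Φ).mulVec c := by
  conv_rhs => rw [Matrix.mul_assoc, ← Matrix.mulVec_mulVec, ← Matrix.mulVec_mulVec,
    Matrix.dotProduct_mulVec, ← Matrix.star_mulVec]

/-- **deflation theorem for generalized eigenvalue problems.** Let `H` be
an `n × n` complex Hermitian matrix, `M` an `n × n` complex Hermitian positive definite
matrix, and suppose `φ 0, …, φ (n-1) ∈ ℂⁿ` satisfy `H (φ i) = λ i • M (φ i)` with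
`λ 0 ≤ ⋯ ≤ λ (n-1)` real and `(φ i)† M (φ j) = δᵢⱼ`. Fix an index `k` and real numbers
`β m` with `β m > λ k - λ m` for each `m < k`. Define
`H' = H + Σ_{m<k} β m • (M φ m)(M φ m)†`. Then the infimum over nonzero `φ ∈ ℂⁿ` of
`φ†H'φ / φ†Mφ` equals `λ k`, and it is attained at `φ = φ k`. -/
theorem gevp_deflation {n : ℕ} (H M : Matrix (Fin n) (Fin n) ℂ)
    (hH : H.IsHermitian) (hM : M.PosDef)
    (lam : Fin n → ℝ) (hlam : Monotone lam)
    (φ : Fin n → (Fin n → ℂ))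
    (heig : ∀ i, H.mulVec (φ i) = (lam i : ℂ) • M.mulVec (φ i))
    (horth : ∀ i j, star (φ i) ⬝ᵥ M.mulVec (φ j) = if i = j then (1 : ℂ) else 0)
    (k : Fin n) (β : Fin n → ℝ) (hβ : ∀ m, m < k → lam k - lam m < β m)
    (H' : Matrix (Fin n) (Fin n) ℂ)
    (hH' : H' = H + ∑ m ∈ Finset.Iio k,
        (β m : ℂ) • Matrix.vecMulVec (M.mulVec (φ m)) (star (M.mulVec (φ m)))) :
    IsLeast
      { x : ℝ | ∃ w : Fin n → ℂ, w ≠ 0 ∧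
          x = (star w ⬝ᵥ H'.mulVec w).re / (star w ⬝ᵥ M.mulVec w).re }
      (lam k) ∧
    (star (φ k) ⬝ᵥ H'.mulVec (φ k)).re / (star (φ k) ⬝ᵥ M.mulVec (φ k)).re = lam k := by
  classical
  set Φ : Matrix (Fin n) (Fin n) ℂ := Matrix.of (fun i j => φ j i) with hΦdef
  -- entry formula
  have hentry : ∀ (A : Matrix (Fin n) (Fin n) ℂ) (i j : Fin n),
      (Φᴴ * A * Φ) i j = star (φ i) ⬝ᵥ A.mulVec (φ j) := by
    intro A i j
    rw [Matrix.mul_assoc]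
    simp only [Matrix.mul_apply, Matrix.mulVec, dotProduct,
      Matrix.conjTranspose_apply, hΦdef, Matrix.of_apply, Pi.star_apply]
  have hMdiag : Φᴴ * M * Φ = 1 := by
    ext i j
    rw [hentry, horth, Matrix.one_apply]
  -- the value function
  set d : Fin n → ℝ := fun i => lam i + if i < k then β i else 0 with hd
  have hH'entry : ∀ i j : Fin n,
      star (φ i) ⬝ᵥ H'.mulVec (φ j) = if i = j then (d i : ℂ) else 0 := by
    intro i j
    rw [hH', Matrix.add_mulVec, dotProduct_add, heig, dotProduct_smul, smul_eq_mul, horth]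
    have hsum : star (φ i) ⬝ᵥ (∑ m ∈ Finset.Iio k,
        (β m : ℂ) • Matrix.vecMulVec (M.mulVec (φ m)) (star (M.mulVec (φ m)))).mulVec (φ j)
        = ∑ m ∈ Finset.Iio k, (β m : ℂ) *
            ((star (φ i) ⬝ᵥ M.mulVec (φ m)) * (star (M.mulVec (φ m)) ⬝ᵥ φ j)) := by
      rw [sum_mulVec', dotProduct_sum']
      apply Finset.sum_congr rfl
      intro m _
      rw [Matrix.smul_mulVec, dotProduct_smul, smul_eq_mul, vecMulVec_quad]
    rw [hsum]
    have hconj : ∀ m j : Fin n, star (M.mulVec (φ m)) ⬝ᵥ φ j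
        = if j = m then (1 : ℂ) else 0 := by
      intro m j
      rw [Matrix.star_dotProduct, horth]
      split_ifs <;> simp
    by_cases hij : i = j
    · subst hij
      simp only [if_pos rfl, mul_one]
      have : ∀ m ∈ Finset.Iio k, (β m : ℂ) *
          ((star (φ i) ⬝ᵥ M.mulVec (φ m)) * (star (M.mulVec (φ m)) ⬝ᵥ φ i))
          = if m = i ∧ i < k then (β i : ℂ) else 0 := by
        intro m hm
        rw [horth, hconj]
        rcases eq_or_ne m i with h | h
        · subst h
          simp [Finset.mem_Iio.mp hm]
        · simp [Ne.symm h, h]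
      rw [Finset.sum_congr rfl this]
      rcases lt_or_ge i k with hik | hik
      · have hrw : ∀ m ∈ Finset.Iio k, (if m = i ∧ i < k then (β i : ℂ) else 0)
            = if m = i then (β i : ℂ) else 0 := by
          intro m _
          simp [hik]
        rw [Finset.sum_congr rfl hrw, Finset.sum_ite_eq']
        simp [hd, hik, Finset.mem_Iio]
      · have : ∀ m ∈ Finset.Iio k, ¬(m = i ∧ i < k) := by
          intro m hm
          rintro ⟨rfl, h2⟩
          exact absurd h2 (not_lt.mpr hik)
        simp only [hd]
        rw [Finset.sum_congr rfl (fun m hm => if_neg (this m hm))]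
        simp [not_lt.mpr hik]
    · simp only [if_neg hij]
      rw [Finset.sum_eq_zero, add_zero, mul_zero]
      intro m hm
      rw [horth, hconj]
      rcases eq_or_ne i m with h | h
      · subst h
        have : j ≠ i := fun h => hij h.symm
        simp [this]
      · simp [h]
  have hH'diag : Φᴴ * H' * Φ = Matrix.diagonal (fun i => (d i : ℂ)) := by
    ext i j
    rw [hentry, hH'entry, Matrix.diagonal_apply]
  -- d i ≥ lam k
  have hdk : ∀ i, lam k ≤ d i := by
    intro i
    rcases lt_or_ge i k with h | h
    · have := hβ i h
      simp only [hd, if_pos h]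
      linarith
    · simp only [hd, if_neg (not_lt.mpr h)]
      have := hlam h
      linarith
  -- invertibility
  have hΦinv : Φ * (Φᴴ * M) = 1 :=
    mul_eq_one_comm.mpr hMdiag
  -- key lower bound
  have hlow : ∀ w : Fin n → ℂ, w ≠ 0 →
      lam k ≤ (star w ⬝ᵥ H'.mulVec w).re / (star w ⬝ᵥ M.mulVec w).re := by
    intro w hw
    set c : Fin n → ℂ := (Φᴴ * M).mulVec w with hc
    have hwc : Φ.mulVec c = w := by
      rw [hc, Matrix.mulVec_mulVec, hΦinv, Matrix.one_mulVec]
    have hcne : c ≠ 0 := by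
      intro h
      apply hw
      rw [← hwc, h, Matrix.mulVec_zero]
    have hMform : (star w ⬝ᵥ M.mulVec w).re = ∑ i, Complex.normSq (c i) := by
      rw [← hwc, quad_transfer, hMdiag, Matrix.one_mulVec, dotProduct, Complex.re_sum]
      apply Finset.sum_congr rfl
      intro i _
      simp [Complex.normSq_apply]
    have hH'form : (star w ⬝ᵥ H'.mulVec w).re = ∑ i, d i * Complex.normSq (c i) := by
      rw [← hwc, quad_transfer, hH'diag, dotProduct, Complex.re_sum]
      apply Finset.sum_congr rfl
      intro i _
      rw [Matrix.mulVec_diagonal]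
      have : (starRingEnd ℂ) (c i) * ((d i : ℂ) * c i)
          = (d i : ℂ) * (Complex.normSq (c i) : ℂ) := by
        rw [Complex.normSq_eq_conj_mul_self]
        ring
      simpa [Pi.star_apply, RCLike.star_def] using congrArg Complex.re this
    have hden : 0 < ∑ i, Complex.normSq (c i) := by
      obtain ⟨i, hi⟩ := Function.ne_iff.mp hcne
      apply Finset.sum_pos' (fun j _ => Complex.normSq_nonneg _)
      exact ⟨i, Finset.mem_univ i, Complex.normSq_pos.mpr hi⟩
    rw [hMform, hH'form, le_div_iff₀ hden]
    calc lam k * ∑ i, Complex.normSq (c i)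
        = ∑ i, lam k * Complex.normSq (c i) := by rw [Finset.mul_sum]
      _ ≤ ∑ i, d i * Complex.normSq (c i) :=
          Finset.sum_le_sum fun i _ =>
            mul_le_mul_of_nonneg_right (hdk i) (Complex.normSq_nonneg _)
  -- attained at φ k
  have hφkM : star (φ k) ⬝ᵥ M.mulVec (φ k) = 1 := by simpa using horth k k
  have hφkne : φ k ≠ 0 := by
    intro h
    have := hφkM
    rw [h] at this
    simp at this
  have hφkH' : star (φ k) ⬝ᵥ H'.mulVec (φ k) = (lam k : ℂ) := by
    rw [hH'entry k k, if_pos rfl, hd]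
    simp
  have hattain : (star (φ k) ⬝ᵥ H'.mulVec (φ k)).re
      / (star (φ k) ⬝ᵥ M.mulVec (φ k)).re = lam k := by
    rw [hφkH', hφkM]
    simp
  refine ⟨⟨⟨φ k, hφkne, hattain.symm⟩, ?_⟩, hattain⟩
  rintro x ⟨w, hw, rfl⟩
  exact hlow w hw
end
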